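/- If two words x and y satisfy Levenshtein distance lev(x, y) ≤ d, then there exist words x' and y' such that x' is obtained from x by deleting at most d characters, y' is obtained from y by deleting at most d characters, and x' = y'. -/

import Mathlib

structure Levenshtein.Cost (α β δ : Type*) where
  delete : α → δ
  insert : β → δ
  substitute : α → β → δ

def Levenshtein.defaultCost {α : Type*} [DecidableEq α] : Levenshtein.Cost α α ℕ where
  delete _ := 1
  insert _ := 1
  substitute a b := if a = b then 0 else 1

def Levenshtein.impl {α β δ : Type*} [AddZeroClass δ] [Min δ] (C : Levenshtein.Cost α β δ)
    (xs : List α) (y : β) (d : {r : List δ // 0 < r.length}) : {r : List δ // 0 < r.length} :=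
  let ⟨ds, w⟩ := d
  xs.zip (ds.zip ds.tail) |>.foldr
    (init := ⟨[C.insert y + ds.getLast (List.length_pos_iff.mp w)], by simp⟩)
    (fun ⟨x, d₀, d₁⟩ ⟨r, w⟩ =>
      ⟨min (C.delete x + r[0]) (min (C.insert y + d₀) (C.substitute x y + d₁)) :: r, by simp⟩)

def suffixLevenshtein {α β δ : Type*} [AddZeroClass δ] [Min δ] (C : Levenshtein.Cost α β δ)
    (xs : List α) (ys : List β) : {r : List δ // 0 < r.length} :=
  ys.foldr
    (Levenshtein.impl C xs)
    (xs.foldr (init := ⟨[0], by simp⟩) (fun a ⟨r, w⟩ => ⟨(C.delete a + r[0]) :: r, by simp⟩))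

def levenshtein {α β δ : Type*} [AddZeroClass δ] [Min δ] (C : Levenshtein.Cost α β δ)
    (xs : List α) (ys : List β) : δ :=
  let ⟨r, w⟩ := suffixLevenshtein C xs ys
  r[0]

/-! A deletion from `x` or an insertion into `y` costs one deletion from that side only, a
substitution of `a` by `b ≠ a` is paid for by deleting `a` from `x` and `b` from `y`, and a match
keeps its letter in the common subsequence. So along the recursion defining `levenshtein`, each
unit of edit cost adds at most one deletion to each side. -/

section Recursion

open Levenshtein

variable {α β δ : Type*} [AddZeroClass δ] [Min δ] (C : Cost α β δ)

theorem Levenshtein.impl_cons (x : α) (xs : List α) (y : β) (a : δ) (ds : List δ)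
    (hds : 0 < ds.length) :
    (impl C (x :: xs) y ⟨a :: ds, by simp⟩).1 =
      min (C.delete x + (impl C xs y ⟨ds, hds⟩).1[0]'(impl C xs y ⟨ds, hds⟩).2)
        (min (C.insert y + a) (C.substitute x y + ds[0])) :: (impl C xs y ⟨ds, hds⟩).1 := by
  cases ds with
  | nil => simp at hds
  | cons b rest => rfl

theorem suffixLevenshtein_nil_left (ys : List β) :
    (suffixLevenshtein C ([] : List α) ys).1 = [levenshtein C [] ys] := by
  cases ys <;> rfl

theorem suffixLevenshtein_cons_left (x : α) (xs : List α) (ys : List β) :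
    (suffixLevenshtein C (x :: xs) ys).1 =
      levenshtein C (x :: xs) ys :: (suffixLevenshtein C xs ys).1 := by
  induction ys with
  | nil => rfl
  | cons y ys ih =>
    have e : suffixLevenshtein C (x :: xs) ys =
        ⟨levenshtein C (x :: xs) ys :: (suffixLevenshtein C xs ys).1, by simp⟩ := Subtype.ext ih
    change (impl C (x :: xs) y (suffixLevenshtein C (x :: xs) ys)).1 =
      (impl C (x :: xs) y (suffixLevenshtein C (x :: xs) ys)).1[0]'(impl C _ y _).2 :: _
    simp only [e, impl_cons (hds := (suffixLevenshtein C xs ys).2)]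
    rfl

theorem levenshtein_nil_cons (y : β) (ys : List β) :
    levenshtein C ([] : List α) (y :: ys) = C.insert y + levenshtein C [] ys := by
  have e : suffixLevenshtein C ([] : List α) ys = ⟨[levenshtein C [] ys], by simp⟩ :=
    Subtype.ext (suffixLevenshtein_nil_left C ys)
  change (impl C [] y (suffixLevenshtein C [] ys)).1[0]'(impl C [] y _).2 = _
  rw [e]
  rfl

theorem levenshtein_cons_nil (x : α) (xs : List α) :
    levenshtein C (x :: xs) ([] : List β) = C.delete x + levenshtein C xs [] := rfl

theorem levenshtein_cons_cons (x : α) (xs : List α) (y : β) (ys : List β) :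
    levenshtein C (x :: xs) (y :: ys) =
      min (C.delete x + levenshtein C xs (y :: ys))
        (min (C.insert y + levenshtein C (x :: xs) ys)
          (C.substitute x y + levenshtein C xs ys)) := by
  have e : suffixLevenshtein C (x :: xs) ys =
      ⟨levenshtein C (x :: xs) ys :: (suffixLevenshtein C xs ys).1, by simp⟩ :=
    Subtype.ext (suffixLevenshtein_cons_left C x xs ys)
  change (impl C (x :: xs) y (suffixLevenshtein C (x :: xs) ys)).1[0]'(impl C _ y _).2 = _
  simp only [e, impl_cons (hds := (suffixLevenshtein C xs ys).2)]
  rfl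

end Recursion

section CommonDeletion

variable {α : Type*}

def HasCommonDeletion (n : ℕ) (x y : List α) : Prop :=
  ∃ z : List α, z.Sublist x ∧ x.length ≤ z.length + n ∧
    z.Sublist y ∧ y.length ≤ z.length + n

theorem HasCommonDeletion.mono {n m : ℕ} {x y : List α} (hnm : n ≤ m)
    (h : HasCommonDeletion n x y) : HasCommonDeletion m x y := by
  obtain ⟨z, hzx, hx, hzy, hy⟩ := h
  exact ⟨z, hzx, by omega, hzy, by omega⟩

theorem HasCommonDeletion.symm {n : ℕ} {x y : List α} (h : HasCommonDeletion n x y) :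
    HasCommonDeletion n y x := by
  obtain ⟨z, hzx, hx, hzy, hy⟩ := h
  exact ⟨z, hzy, hy, hzx, hx⟩

theorem hasCommonDeletion_nil_nil : HasCommonDeletion 0 ([] : List α) [] :=
  ⟨[], .slnil, le_rfl, .slnil, le_rfl⟩

theorem HasCommonDeletion.cons_left {n : ℕ} {xs y : List α} (a : α)
    (h : HasCommonDeletion n xs y) : HasCommonDeletion (n + 1) (a :: xs) y := by
  obtain ⟨z, hzx, hx, hzy, hy⟩ := h
  exact ⟨z, hzx.cons a, by simp; omega, hzy, by omega⟩

theorem HasCommonDeletion.cons_right {n : ℕ} {x ys : List α} (b : α)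
    (h : HasCommonDeletion n x ys) : HasCommonDeletion (n + 1) x (b :: ys) :=
  (h.symm.cons_left b).symm

theorem HasCommonDeletion.cons_cons {n : ℕ} {xs ys : List α} (a : α)
    (h : HasCommonDeletion n xs ys) : HasCommonDeletion n (a :: xs) (a :: ys) := by
  obtain ⟨z, hzx, hx, hzy, hy⟩ := h
  exact ⟨a :: z, hzx.cons_cons a, by simp; omega, hzy.cons_cons a, by simp; omega⟩

theorem HasCommonDeletion.cons_left_cons_right {n : ℕ} {xs ys : List α} (a b : α)
    (h : HasCommonDeletion n xs ys) : HasCommonDeletion (n + 1) (a :: xs) (b :: ys) := by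
  obtain ⟨z, hzx, hx, hzy, hy⟩ := h
  exact ⟨z, hzx.cons a, by simp; omega, hzy.cons b, by simp; omega⟩

theorem hasCommonDeletion_levenshtein (C : Levenshtein.Cost α α ℕ)
    (hdelete : ∀ a, 1 ≤ C.delete a) (hinsert : ∀ b, 1 ≤ C.insert b)
    (hsubstitute : ∀ a b, a ≠ b → 1 ≤ C.substitute a b) (x y : List α) :
    HasCommonDeletion (levenshtein C x y) x y := by
  induction x generalizing y with
  | nil =>
    induction y with
    | nil => exact hasCommonDeletion_nil_nil
    | cons b ys ih =>
      rw [levenshtein_nil_cons]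
      exact (ih.cons_right b).mono (by linarith [hinsert b])
  | cons a xs ihx =>
    induction y with
    | nil =>
      rw [levenshtein_cons_nil]
      exact ((ihx []).cons_left a).mono (by linarith [hdelete a])
    | cons b ys ihy =>
      rw [levenshtein_cons_cons]
      refine min_rec' (HasCommonDeletion · _ _) ?_ (min_rec' (HasCommonDeletion · _ _) ?_ ?_)
      · exact ((ihx (b :: ys)).cons_left a).mono (by linarith [hdelete a])
      · exact (ihy.cons_right b).mono (by linarith [hinsert b])
      · by_cases hab : a = b
        · subst hab
          exact ((ihx ys).cons_cons a).mono (Nat.le_add_left _ _)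
        · exact ((ihx ys).cons_left_cons_right a b).mono (by linarith [hsubstitute a b hab])

end CommonDeletion

/-- Completeness of symmetric deletion lookup: if `lev(x,y) ≤ d` then `x` and `y`
share a common subsequence obtained from each by deleting at most `d` characters. -/
theorem symdel_complete {σ : Type*} [DecidableEq σ] (x y : List σ) (d : ℕ)
    (h : levenshtein Levenshtein.defaultCost x y ≤ d) :
    ∃ z : List σ, z.Sublist x ∧ x.length ≤ z.length + d ∧
      z.Sublist y ∧ y.length ≤ z.length + d := by
  have hsubstitute (a b : σ) (hab : a ≠ b) : 1 ≤ Levenshtein.defaultCost.substitute a b := by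
    simp [Levenshtein.defaultCost, hab]
  exact (hasCommonDeletion_levenshtein _ (fun _ => le_rfl) (fun _ => le_rfl) hsubstitute x y).mono h
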